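/- (Pair representation of P10.) Let Y¹ and Y⁰ be independent random variables, each exponentially distributed with rate 1, let τ¹ be the honest random time on [s,t] associated with the intensity λ1 and driven by Y¹, and let τ⁰ be the honest random time on [s,t] associated with the intensity λ0 and driven by Y⁰. Then P(τ¹ > τ⁰) = P10(s,t); in particular the indicator 1(τ¹ > τ⁰) is an unbiased estimator of P10(s,t). -/

import Mathlib

/-!
Write `Λ(v) = ∫_v^t λ`. Because `Λ` is continuous and antitone on `[s,t]`, the set defining an
honest time is closed, and for `y ≥ 0`, `v ∈ [s,t]` one gets `v < τ(y) ↔ y < Λ(v)`. Driven by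
`Y ~ Exp(1)` (which is a.s. nonnegative), `τ` therefore has `P(τ ≤ v) = exp(-Λ(v))` on `[s,t]`:
an atom at `s` plus the density `λ e^{-Λ}` on `(s,t]`. Conditioning on `Y⁰` and exchanging the
integrals,
`P(τ¹ > τ⁰) = ∫_{[s,t]} λ₁(u) e^{-Λ₁(u)} P(τ⁰ ≤ u) du = ∫_s^t λ₁(u) e^{-Λ₁(u) - Λ₀(u)} du`.
-/

open MeasureTheory ProbabilityTheory Real

/-- The honest random time on `[s,t]` associated with the intensity `lam`,
driven by the value `y`: `max (s, inf {r ∈ [s,t] : ∫_r^t lam ≤ y})`. -/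
noncomputable def honestTime (s t : ℝ) (lam : ℝ → ℝ) (y : ℝ) : ℝ :=
  max s (sInf {r | r ∈ Set.Icc s t ∧ ∫ u in r..t, lam u ≤ y})

namespace ProbabilityTheory

open Set

instance nullSingletonClass_expMeasure (r : ℝ) : NullSingletonClass (expMeasure r) := by
  unfold expMeasure gammaMeasure
  infer_instance

variable {r c : ℝ}

lemma expMeasure_Iic (hr : 0 < r) (hc : 0 ≤ c) :
    expMeasure r (Iic c) = ENNReal.ofReal (1 - exp (-(r * c))) := by
  have := isProbabilityMeasure_expMeasure hr
  rw [← ofReal_cdf, cdf_expMeasure_eq hr, if_pos hc]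

lemma expMeasure_Iio (hr : 0 < r) (hc : 0 ≤ c) :
    expMeasure r (Iio c) = ENNReal.ofReal (1 - exp (-(r * c))) := by
  rw [measure_congr Iio_ae_eq_Iic, expMeasure_Iic hr hc]

lemma expMeasure_Ici (hr : 0 < r) (hc : 0 ≤ c) :
    expMeasure r (Ici c) = ENNReal.ofReal (exp (-(r * c))) := by
  have := isProbabilityMeasure_expMeasure hr
  have hexp : exp (-(r * c)) ≤ 1 := exp_le_one_iff.2 (by nlinarith)
  rw [← compl_Iio, prob_compl_eq_one_sub measurableSet_Iio, expMeasure_Iio hr hc,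
    ← ENNReal.ofReal_one, ← ENNReal.ofReal_sub _ (sub_nonneg.2 hexp), sub_sub_cancel]

lemma ae_nonneg_expMeasure (hr : 0 < r) : ∀ᵐ y ∂expMeasure r, 0 ≤ y := by
  refine ae_iff.2 (measure_mono_null (t := Iic 0) (fun y hy => ?_) ?_)
  · exact (not_le.1 hy).le
  · simp [expMeasure_Iic hr le_rfl]

end ProbabilityTheory

section Swap

open Set
open scoped ENNReal

lemma lintegral_setLIntegral_Ici_eq {α : Type*} [MeasurableSpace α] {μ : Measure α} [SFinite μ]
    {ν : Measure ℝ} [SFinite ν] {X : α → ℝ} (hX : Measurable X) {f : ℝ → ℝ≥0∞}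
    (hf : Measurable f) :
    ∫⁻ a, ∫⁻ u in Ici (X a), f u ∂ν ∂μ = ∫⁻ u, μ {a | X a ≤ u} * f u ∂ν := by
  have hE : MeasurableSet {p : α × ℝ | X p.1 ≤ p.2} :=
    measurableSet_le (hX.comp measurable_fst) measurable_snd
  calc ∫⁻ a, ∫⁻ u in Ici (X a), f u ∂ν ∂μ
      = ∫⁻ a, ∫⁻ u, {p : α × ℝ | X p.1 ≤ p.2}.indicator (fun p => f p.2) (a, u) ∂ν ∂μ := by
        simp_rw [← lintegral_indicator measurableSet_Ici]
        rfl
    _ = ∫⁻ u, ∫⁻ a, {p : α × ℝ | X p.1 ≤ p.2}.indicator (fun p => f p.2) (a, u) ∂μ ∂ν :=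
        lintegral_lintegral_swap ((hf.comp measurable_snd).indicator hE).aemeasurable
    _ = ∫⁻ u, μ {a | X a ≤ u} * f u ∂ν := by
        refine lintegral_congr fun u => ?_
        rw [mul_comm]
        exact lintegral_indicator_const (hX measurableSet_Iic) (f u)

end Swap

section IntervalIntegral

open Set

variable {f : ℝ → ℝ} {a b s t v : ℝ}

lemma hasDerivAt_intervalIntegral_left (hf : Continuous f) (t v : ℝ) :
    HasDerivAt (fun v => ∫ u in v..t, f u) (-f v) v :=
  intervalIntegral.integral_hasDerivAt_left (hf.intervalIntegrable v t)
    hf.aestronglyMeasurable.stronglyMeasurableAtFilter hf.continuousAt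

lemma continuous_intervalIntegral_left (hf : Continuous f) (t : ℝ) :
    Continuous fun v => ∫ u in v..t, f u :=
  continuous_iff_continuousAt.2 fun v => (hasDerivAt_intervalIntegral_left hf t v).continuousAt

lemma intervalIntegral_nonneg_of_mem_Icc (hnn : ∀ u ∈ Icc s t, 0 ≤ f u) (hv : v ∈ Icc s t) :
    0 ≤ ∫ u in v..t, f u :=
  intervalIntegral.integral_nonneg hv.2 fun u hu => hnn u ⟨hv.1.trans hu.1, hu.2⟩

lemma integral_mul_exp_neg_integral (hf : Continuous f) (v t : ℝ) :
    ∫ u in v..t, f u * exp (-∫ r in u..t, f r) = 1 - exp (-∫ r in v..t, f r) := by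
  have hderiv (u : ℝ) : HasDerivAt (fun x => exp (-∫ r in x..t, f r))
      (f u * exp (-∫ r in u..t, f r)) u := by
    simpa [mul_comm] using (hasDerivAt_intervalIntegral_left hf t u).neg.exp
  have hcont : Continuous fun u => f u * exp (-∫ r in u..t, f r) :=
    hf.mul (continuous_intervalIntegral_left hf t).neg.rexp
  rw [intervalIntegral.integral_eq_sub_of_hasDerivAt (fun u _ => hderiv u)
    (hcont.intervalIntegrable v t), intervalIntegral.integral_same, neg_zero, exp_zero]

lemma lintegral_Icc_ofReal_eq (hf : Continuous f) (hab : a ≤ b)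
    (hnn : ∀ u ∈ Icc a b, 0 ≤ f u) :
    ∫⁻ u in Icc a b, ENNReal.ofReal (f u) = ENNReal.ofReal (∫ u in a..b, f u) := by
  rw [← ofReal_integral_eq_lintegral_ofReal hf.integrableOn_Icc
    (ae_restrict_of_forall_mem measurableSet_Icc hnn), integral_Icc_eq_integral_Ioc,
    intervalIntegral.integral_of_le hab]

end IntervalIntegral

section HonestTime

open Set

variable {s t : ℝ} {lam : ℝ → ℝ} {y v : ℝ}

lemma honestTime_le (hv : v ∈ Icc s t) (h : ∫ u in v..t, lam u ≤ y) :
    honestTime s t lam y ≤ v :=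
  max_le hv.1 (csInf_le ⟨s, fun _ hr => hr.1.1⟩ ⟨hv, h⟩)

lemma honestTime_mem_Icc (hst : s ≤ t) (hy : 0 ≤ y) : honestTime s t lam y ∈ Icc s t :=
  ⟨le_max_left _ _, honestTime_le ⟨hst, le_rfl⟩ (by rwa [intervalIntegral.integral_same])⟩

lemma lt_honestTime (hlam : Continuous lam) (hnn : ∀ u ∈ Icc s t, 0 ≤ lam u) (hy : 0 ≤ y)
    (hv : v ∈ Icc s t) (h : y < ∫ u in v..t, lam u) : v < honestTime s t lam y := by
  set S := {r | r ∈ Icc s t ∧ ∫ u in r..t, lam u ≤ y}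
  have hS : IsClosed S :=
    isClosed_Icc.inter (isClosed_le (continuous_intervalIntegral_left hlam t) continuous_const)
  have hinf : sInf S ∈ S :=
    hS.csInf_mem ⟨t, ⟨hv.1.trans hv.2, le_rfl⟩, by rwa [intervalIntegral.integral_same]⟩
      ⟨s, fun _ hr => hr.1.1⟩
  refine (not_le.1 fun hle => h.not_ge ?_).trans_le (le_max_right _ _)
  calc ∫ u in v..t, lam u
      ≤ ∫ u in sInf S..t, lam u :=
        intervalIntegral.integral_mono_interval hle hv.2 le_rfl
          (ae_restrict_of_forall_mem measurableSet_Ioc fun u hu =>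
            hnn u ⟨hinf.1.1.trans hu.1.le, hu.2⟩) (hlam.intervalIntegrable _ _)
    _ ≤ y := hinf.2

lemma lt_honestTime_iff (hlam : Continuous lam) (hnn : ∀ u ∈ Icc s t, 0 ≤ lam u) (hy : 0 ≤ y)
    (hv : v ∈ Icc s t) : v < honestTime s t lam y ↔ y < ∫ u in v..t, lam u :=
  ⟨fun h => not_le.1 fun h' => (honestTime_le hv h').not_gt h, lt_honestTime hlam hnn hy hv⟩

-- `sInf ∅ = 0` in `ℝ`.
lemma honestTime_of_neg (hnn : ∀ u ∈ Icc s t, 0 ≤ lam u) (hy : y < 0) :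
    honestTime s t lam y = max s 0 := by
  have hS : {r | r ∈ Icc s t ∧ ∫ u in r..t, lam u ≤ y} = ∅ :=
    eq_empty_of_forall_notMem fun r hr =>
      (hy.trans_le (intervalIntegral_nonneg_of_mem_Icc hnn hr.1)).not_ge hr.2
  rw [honestTime, hS, Real.sInf_empty]

lemma honestTime_antitoneOn (hst : s ≤ t) : AntitoneOn (honestTime s t lam) (Ici 0) :=
  fun y hy _ _ hyy' => max_le_max le_rfl <| csInf_le_csInf ⟨s, fun _ hr => hr.1.1⟩
    ⟨t, ⟨hst, le_rfl⟩, by rwa [intervalIntegral.integral_same]⟩ fun _ hr => ⟨hr.1, hr.2.trans hyy'⟩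

lemma measurable_honestTime (hst : s ≤ t) (hnn : ∀ u ∈ Icc s t, 0 ≤ lam u) :
    Measurable (honestTime s t lam) := by
  classical
  have hanti : Antitone fun y => honestTime s t lam (max 0 y) := fun y y' hyy' =>
    honestTime_antitoneOn hst (le_max_left 0 y) (le_max_left 0 y') (max_le_max le_rfl hyy')
  have heq : honestTime s t lam = (Iio 0).piecewise (fun _ => max s 0)
      (fun y => honestTime s t lam (max 0 y)) := by
    funext y
    rcases lt_or_ge y 0 with hy | hy
    · rw [piecewise_eq_of_mem _ _ _ (mem_Iio.2 hy), honestTime_of_neg hnn hy]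
    · rw [piecewise_eq_of_notMem _ _ _ (notMem_Iio.2 hy), max_eq_right hy]
  rw [heq]
  exact measurable_const.piecewise measurableSet_Iio hanti.measurable

lemma expMeasure_lt_honestTime (hlam : Continuous lam) (hnn : ∀ u ∈ Icc s t, 0 ≤ lam u)
    (hv : v ∈ Icc s t) :
    expMeasure 1 {y | v < honestTime s t lam y}
      = ENNReal.ofReal (1 - exp (-∫ u in v..t, lam u)) := by
  have hae : {y | v < honestTime s t lam y} =ᵐ[expMeasure 1] Iio (∫ u in v..t, lam u) :=
    Filter.eventuallyEq_set.2 <| (ae_nonneg_expMeasure one_pos).mono fun y hy =>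
      lt_honestTime_iff hlam hnn hy hv
  rw [measure_congr hae, expMeasure_Iio one_pos (intervalIntegral_nonneg_of_mem_Icc hnn hv),
    one_mul]

lemma expMeasure_honestTime_le (hlam : Continuous lam) (hnn : ∀ u ∈ Icc s t, 0 ≤ lam u)
    (hv : v ∈ Icc s t) :
    expMeasure 1 {y | honestTime s t lam y ≤ v} = ENNReal.ofReal (exp (-∫ u in v..t, lam u)) := by
  have hae : {y | honestTime s t lam y ≤ v} =ᵐ[expMeasure 1] Ici (∫ u in v..t, lam u) :=
    Filter.eventuallyEq_set.2 <| (ae_nonneg_expMeasure one_pos).mono fun y hy =>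
      not_lt.symm.trans ((lt_honestTime_iff hlam hnn hy hv).not.trans not_lt)
  rw [measure_congr hae, expMeasure_Ici one_pos (intervalIntegral_nonneg_of_mem_Icc hnn hv),
    one_mul]

lemma expMeasure_lt_honestTime_eq_lintegral (hlam : Continuous lam)
    (hnn : ∀ u ∈ Icc s t, 0 ≤ lam u) (hv : v ∈ Icc s t) :
    expMeasure 1 {y | v < honestTime s t lam y}
      = ∫⁻ u in Ici v, ENNReal.ofReal (lam u * exp (-∫ r in u..t, lam r))
          ∂volume.restrict (Icc s t) := by
  have hcont : Continuous fun u => lam u * exp (-∫ r in u..t, lam r) :=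
    hlam.mul (continuous_intervalIntegral_left hlam t).neg.rexp
  have hIcc : Ici v ∩ Icc s t = Icc v t :=
    Set.ext fun u => ⟨fun h => ⟨h.1, h.2.2⟩, fun h => ⟨h.1, hv.1.trans h.1, h.2⟩⟩
  rw [Measure.restrict_restrict measurableSet_Ici, hIcc,
    lintegral_Icc_ofReal_eq hcont hv.2 fun u hu =>
      mul_nonneg (hnn u ⟨hv.1.trans hu.1, hu.2⟩) (exp_nonneg _),
    integral_mul_exp_neg_integral hlam, expMeasure_lt_honestTime hlam hnn hv]

lemma expMeasure_prod_honestTime_lt (hst : s ≤ t) {lam0 lam1 : ℝ → ℝ}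
    (hlam0 : Continuous lam0) (hlam1 : Continuous lam1)
    (hlam0_nonneg : ∀ u ∈ Icc s t, 0 ≤ lam0 u) (hlam1_nonneg : ∀ u ∈ Icc s t, 0 ≤ lam1 u) :
    (expMeasure 1).prod (expMeasure 1) {p | honestTime s t lam0 p.2 < honestTime s t lam1 p.1}
      = ENNReal.ofReal
          (∫ v in s..t, exp (-(∫ r in v..t, (lam0 r + lam1 r))) * lam1 v) := by
  have := isProbabilityMeasure_expMeasure one_pos
  have hτ0 := measurable_honestTime hst hlam0_nonneg
  have hg1 : Continuous fun u => lam1 u * exp (-∫ r in u..t, lam1 r) :=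
    hlam1.mul (continuous_intervalIntegral_left hlam1 t).neg.rexp
  calc _ = ∫⁻ y0, expMeasure 1 {y1 | honestTime s t lam0 y0 < honestTime s t lam1 y1}
          ∂expMeasure 1 :=
        Measure.prod_apply_symm <| measurableSet_lt (hτ0.comp measurable_snd)
          ((measurable_honestTime hst hlam1_nonneg).comp measurable_fst)
    _ = ∫⁻ y0, ∫⁻ u in Ici (honestTime s t lam0 y0),
          ENNReal.ofReal (lam1 u * exp (-∫ r in u..t, lam1 r)) ∂volume.restrict (Icc s t)
          ∂expMeasure 1 :=
        lintegral_congr_ae <| (ae_nonneg_expMeasure one_pos).mono fun y0 hy0 =>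
          expMeasure_lt_honestTime_eq_lintegral hlam1 hlam1_nonneg
            (honestTime_mem_Icc hst hy0)
    _ = ∫⁻ u in Icc s t, expMeasure 1 {y0 | honestTime s t lam0 y0 ≤ u} *
          ENNReal.ofReal (lam1 u * exp (-∫ r in u..t, lam1 r)) :=
        lintegral_setLIntegral_Ici_eq hτ0 (ENNReal.measurable_ofReal.comp hg1.measurable)
    _ = ∫⁻ u in Icc s t, ENNReal.ofReal
          (exp (-∫ r in u..t, lam0 r) * (lam1 u * exp (-∫ r in u..t, lam1 r))) :=
        setLIntegral_congr_fun measurableSet_Icc fun u hu => by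
          rw [expMeasure_honestTime_le hlam0 hlam0_nonneg hu, ENNReal.ofReal_mul (exp_nonneg _)]
    _ = ENNReal.ofReal (∫ u in s..t,
          exp (-∫ r in u..t, lam0 r) * (lam1 u * exp (-∫ r in u..t, lam1 r))) :=
        lintegral_Icc_ofReal_eq
          ((continuous_intervalIntegral_left hlam0 t).neg.rexp.mul hg1) hst fun u hu =>
          mul_nonneg (exp_nonneg _) (mul_nonneg (hlam1_nonneg u hu) (exp_nonneg _))
    _ = _ := by
        refine congrArg ENNReal.ofReal (intervalIntegral.integral_congr fun u _ => ?_)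
        rw [intervalIntegral.integral_add (hlam0.intervalIntegrable u t)
          (hlam1.intervalIntegrable u t), neg_add, exp_add]
        ring

end HonestTime

theorem pair_representation_P10_general
    {Ω : Type*} [MeasurableSpace Ω] (P : Measure Ω) [IsProbabilityMeasure P]
    (s t : ℝ) (hst : s < t)
    (lam0 lam1 : ℝ → ℝ) (hlam0 : Continuous lam0) (hlam1 : Continuous lam1)
    (hlam0_nonneg : ∀ u ∈ Set.Icc s t, 0 ≤ lam0 u)
    (hlam1_nonneg : ∀ u ∈ Set.Icc s t, 0 ≤ lam1 u)
    (Y1 Y0 : Ω → ℝ) (hY1 : Measurable Y1) (hY0 : Measurable Y0)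
    (hY1law : P.map Y1 = expMeasure 1) (hY0law : P.map Y0 = expMeasure 1)
    (hindep : IndepFun Y1 Y0 P) :
    P {ω | honestTime s t lam1 (Y1 ω) > honestTime s t lam0 (Y0 ω)}
      = ENNReal.ofReal
          (∫ v in s..t, Real.exp (-(∫ r in v..t, (lam0 r + lam1 r))) * lam1 v) := by
  have hC : MeasurableSet {p : ℝ × ℝ | honestTime s t lam0 p.2 < honestTime s t lam1 p.1} :=
    measurableSet_lt ((measurable_honestTime hst.le hlam0_nonneg).comp measurable_snd)
      ((measurable_honestTime hst.le hlam1_nonneg).comp measurable_fst)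
  have hlaw : P.map (fun ω => (Y1 ω, Y0 ω)) = (expMeasure 1).prod (expMeasure 1) := by
    rw [(indepFun_iff_map_prod_eq_prod_map_map hY1.aemeasurable hY0.aemeasurable).1 hindep,
      hY1law, hY0law]
  rw [← expMeasure_prod_honestTime_lt hst.le hlam0 hlam1 hlam0_nonneg hlam1_nonneg, ← hlaw,
    Measure.map_apply (hY1.prodMk hY0) hC]
  rfl

/-- Pair representation of `P₁₀`: with `τ¹`, `τ⁰` the honest times on `[s,t]` associated
with `λ₁`, `λ₀`, driven by independent `Exp(1)` random variables,
`P(τ¹ > τ⁰) = P₁₀(s,t) = ∫_s^t exp (-∫_v^t (λ₀+λ₁)(r) dr) λ₁(v) dv`;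
the indicator `1(τ¹ > τ⁰)` is an unbiased estimator of `P₁₀(s,t)`. -/
theorem pair_representation_P10
    {Ω : Type*} [MeasurableSpace Ω] (P : Measure Ω) [IsProbabilityMeasure P]
    (s t : ℝ) (hs : 0 ≤ s) (hst : s < t)
    (lam0 lam1 : ℝ → ℝ) (hlam0 : Continuous lam0) (hlam1 : Continuous lam1)
    (hlam0_nonneg : ∀ u ∈ Set.Icc s t, 0 ≤ lam0 u)
    (hlam1_nonneg : ∀ u ∈ Set.Icc s t, 0 ≤ lam1 u)
    (Y1 Y0 : Ω → ℝ) (hY1 : Measurable Y1) (hY0 : Measurable Y0)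
    (hY1law : P.map Y1 = expMeasure 1) (hY0law : P.map Y0 = expMeasure 1)
    (hindep : IndepFun Y1 Y0 P) :
    P {ω | honestTime s t lam1 (Y1 ω) > honestTime s t lam0 (Y0 ω)}
      = ENNReal.ofReal
          (∫ v in s..t, Real.exp (-(∫ r in v..t, (lam0 r + lam1 r))) * lam1 v) :=
  pair_representation_P10_general P s t hst lam0 lam1 hlam0 hlam1 hlam0_nonneg hlam1_nonneg Y1 Y0
    hY1 hY0 hY1law hY0law hindep
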